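/- arXiv:0905.2926 — 2 statements merged into one kernel-verified Lean document; each statement's English description precedes it below -/
import Mathlib

section
/- Let the rebalancing rule depend only on the ratio C/G, i.e. the risky weight is w(t, C/G), let the risky asset have independent log-increments, and let the guarantee be updated at lock-in dates by G_{I+1} = G_I·f(C_I/G_I, C_{I+1}/G_I) for a positive function f. If a European payoff has the homogeneous form P(C,G) = G·P̃(C/G), then the fair price at each lock-in date is homogeneous: V(t_I, C, G) = G·Ṽ(t_I, C/G) for some function Ṽ, where prices are defined by backward risk-neutral discounted expectations V(t_I, C_I, G_I) = e^{-r(t_{I+1}-t_I)}·E[V(t_{I+1}, C_{I+1}, G_{I+1}) | C_I, G_I]. -/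
/-!
A price function is homogeneous when `V C G = G · Ṽ (C / G)`. One backward step preserves
homogeneity: for `G > 0`, the next-period arguments `(G z, G f)` have ratio `z / f` and scale
`G f`, so each integrand is `G` times a function of `C / G` and `z` alone, and the factor `G`
leaves the integral. Backward induction from the homogeneous terminal payoff gives the theorem.
-/

open MeasureTheory

def IsRatioHomogeneous (W : ℝ → ℝ → ℝ) : Prop :=
  ∃ Wt : ℝ → ℝ, ∀ C G : ℝ, 0 < G → W C G = G * Wt (C / G)

lemma apply_mul_mul_of_ratio_eq {W : ℝ → ℝ → ℝ} {Wt : ℝ → ℝ}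
    (hW : ∀ C G : ℝ, 0 < G → W C G = G * Wt (C / G)) {G g : ℝ} (hG : 0 < G) (hg : 0 < g)
    (z : ℝ) : W (G * z) (G * g) = G * (g * Wt (z / g)) := by
  rw [hW _ _ (mul_pos hG hg), mul_div_mul_left _ _ hG.ne', mul_assoc]

lemma IsRatioHomogeneous.backward_step {W U : ℝ → ℝ → ℝ} (hW : IsRatioHomogeneous W)
    (φ f : ℝ → ℝ → ℝ) (hf : ∀ x z, 0 < f x z) (c : ℝ)
    (hU : ∀ C G : ℝ, 0 < G →
      U C G = c * ∫ z : ℝ, φ (C / G) z * W (G * z) (G * f (C / G) z)) :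
    IsRatioHomogeneous U := by
  obtain ⟨Wt, hWt⟩ := hW
  refine ⟨fun x => c * ∫ z : ℝ, φ x z * (f x z * Wt (z / f x z)), fun C G hG => ?_⟩
  have integrand_eq : ∀ z, φ (C / G) z * W (G * z) (G * f (C / G) z)
      = G * (φ (C / G) z * (f (C / G) z * Wt (z / f (C / G) z))) := fun z => by
    rw [apply_mul_mul_of_ratio_eq hWt hG (hf _ _)]
    ring
  simp only [hU C G hG, integrand_eq, integral_const_mul]
  ring

/-- CPPI with profit lock-in: if the one-period transition density `Φ I` of the normalized
value `C/G` depends only on the ratio `C/G`, the guarantee is updated by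
`G' = G · f(C/G, C'/G)` with `f > 0`, prices are given by backward discounted expectations,
and the terminal payoff is homogeneous `P(C,G) = G·P̃(C/G)`, then the fair price at each
lock-in date is homogeneous: `V(t_I, C, G) = G·Ṽ(t_I, C/G)`. -/
theorem lockin_price_homogeneous
    (n : ℕ) (Φ : ℕ → ℝ → ℝ → ℝ) (f : ℝ → ℝ → ℝ) (hf : ∀ x z, 0 < f x z)
    (d : ℕ → ℝ) (Pt : ℝ → ℝ) (V : ℕ → ℝ → ℝ → ℝ)
    (hterm : ∀ C G : ℝ, V n C G = G * Pt (C / G))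
    (hrec : ∀ I < n, ∀ C G : ℝ, 0 < G →
      V I C G = d I * ∫ z : ℝ, Φ I (C / G) z * V (I + 1) (G * z) (G * f (C / G) z)) :
    ∀ I ≤ n, ∃ Vt : ℝ → ℝ, ∀ C G : ℝ, 0 < G → V I C G = G * Vt (C / G) := by
  intro I hI
  induction hI using Nat.decreasingInduction with
  | self => exact ⟨Pt, fun C G _ => hterm C G⟩
  | of_succ I hIn ih => exact IsRatioHomogeneous.backward_step ih (Φ I) f hf (d I) (hrec I hIn)
end

section
/- If the payoff is homogeneous of degree α, P(C,G) = G^α·P̃(C/G), then under the same hypotheses the price at lock-in dates satisfies V(t_I, C, G) = G^α·Ṽ(t_I, C/G), where Ṽ satisfies the recursion with modified kernel Φ̃(x,y) = ∫ δ(y - z/f(x,z))·f(x,z)^α·Φ(x,z) dz. -/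
/-!
Positive homogeneity of degree `α` in `(C, G)` propagates backwards through the recursion:
if the price at `t_{I+1}` is homogeneous, then scaling `(C, G)` by `G > 0` scales the next
state `(G z, G f)` by the same factor, which comes out of the integral as `G ^ α`. Normalising
`G = 1` gives `Ṽ(t_I, x) = V(t_I, x, 1)`, and homogeneity at the next date, applied with the
positive factor `f(x, z)`, turns the two-dimensional recursion into the one-dimensional one.
-/

open MeasureTheory

def IsPosHomogeneous (α : ℝ) (W : ℝ → ℝ → ℝ) : Prop :=
  ∀ C G : ℝ, 0 < G → W C G = G ^ α * W (C / G) 1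

namespace IsPosHomogeneous

variable {α : ℝ} {W : ℝ → ℝ → ℝ}

theorem rpow_mul_comp_div (α : ℝ) (P : ℝ → ℝ) :
    IsPosHomogeneous α (fun C G => G ^ α * P (C / G)) := by
  intro C G _
  simp [Real.one_rpow]

theorem apply_mul_mul (hW : IsPosHomogeneous α W) {G H : ℝ} (hG : 0 < G) (hH : 0 < H)
    (C : ℝ) : W (G * C) (G * H) = G ^ α * W C H := by
  rw [hW _ _ (mul_pos hG hH), hW C H hH, mul_div_mul_left C H hG.ne',
    Real.mul_rpow hG.le hH.le, mul_assoc]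

theorem of_recursion {V : ℝ → ℝ → ℝ} (f φ : ℝ → ℝ → ℝ) (hf : ∀ x z, 0 < f x z) (d : ℝ)
    (hW : IsPosHomogeneous α W)
    (hV : ∀ C G : ℝ, 0 < G → V C G = d * ∫ z : ℝ, φ (C / G) z * W (G * z) (G * f (C / G) z)) :
    IsPosHomogeneous α V := by
  intro C G hG
  have hscale : ∀ z, φ (C / G) z * W (G * z) (G * f (C / G) z) =
      G ^ α * (φ (C / G) z * W z (f (C / G) z)) := fun z => by
    rw [hW.apply_mul_mul hG (hf _ z)]
    ring
  rw [hV C G hG, hV (C / G) 1 one_pos, integral_congr_ae (Filter.Eventually.of_forall hscale),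
    integral_const_mul]
  simp only [div_one, one_mul]
  ring

end IsPosHomogeneous

/-- Homogeneity of degree `α`: if the payoff is `P(C,G) = G^α·P̃(C/G)` then the price at
lock-in dates satisfies `V(t_I, C, G) = G^α·Ṽ(t_I, C/G)`, where `Ṽ` satisfies the one-
dimensional recursion with modified kernel `Φ̃(x,y) = ∫ δ(y - z/f(x,z))·f(x,z)^α·Φ(x,z) dz`. -/
theorem lockin_price_homogeneous_degree_alpha
    (n : ℕ) (α : ℝ) (Φ : ℕ → ℝ → ℝ → ℝ) (f : ℝ → ℝ → ℝ) (hf : ∀ x z, 0 < f x z)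
    (d : ℕ → ℝ) (Pt : ℝ → ℝ) (V : ℕ → ℝ → ℝ → ℝ)
    (hterm : ∀ C G : ℝ, V n C G = G ^ α * Pt (C / G))
    (hrec : ∀ I < n, ∀ C G : ℝ, 0 < G →
      V I C G = d I * ∫ z : ℝ, Φ I (C / G) z * V (I + 1) (G * z) (G * f (C / G) z)) :
    ∃ Vt : ℕ → ℝ → ℝ,
      (∀ I ≤ n, ∀ C G : ℝ, 0 < G → V I C G = G ^ α * Vt I (C / G)) ∧
      (∀ I < n, ∀ x : ℝ,
        Vt I x = d I * ∫ z : ℝ, f x z ^ α * Φ I x z * Vt (I + 1) (z / f x z)) := by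
  have hom : ∀ I ≤ n, IsPosHomogeneous α (V I) := fun I hI => by
    induction hI using Nat.decreasingInduction with
    | self => exact funext₂ hterm ▸ IsPosHomogeneous.rpow_mul_comp_div α Pt
    | of_succ I hI ih => exact .of_recursion f (Φ I) hf (d I) ih (hrec I hI)
  refine ⟨fun I x => V I x 1, hom, fun I hI x => ?_⟩
  simp only [hrec I hI x 1 one_pos, div_one, one_mul]
  congr 2 with z
  rw [hom (I + 1) hI z (f x z) (hf x z)]
  ring
end
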